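/- arXiv:2206.08465 — 3 statements merged into one kernel-verified Lean document; each statement's English description precedes it below -/
import Mathlib

section
/- Fix K, L, a constant c > 0, constants 0 < μ_min ≤ μ_max, and a matrix μ* ∈ ℝ^{K×L} with μ_min ≤ μ*_{kl} ≤ μ_max whose rows are pairwise distinct and whose columns are pairwise distinct. Then for every δ > 0 there exists a constant B = B(δ) > 0 such that: for all positive integers m, n, all row labels z*: {1,…,m} → {1,…,K} with each label class of size ≥ c·m, all column labels w*: {1,…,n} → {1,…,L} with each label class of size ≥ c·n, and all triples (q^z, q^w, μ) with q^z an m×K row-stochastic matrix, q^w an n×L row-stochastic matrix, and μ ∈ ℝ^{K×L} with μ_min ≤ μ_{kl} ≤ μ_max, if d((q^z, q^w, μ), ω) ≥ δ for every ω in the equivalence class E of (1^{z*}, 1^{w*}, μ*), then G(q^z, q^w, μ) ≥ B. -/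
open scoped BigOperators

namespace DCLBM

/-- The indicator (hard-assignment) matrix `1^{z}` of a label vector `z`. -/
noncomputable def indic {m K : ℕ} (z : Fin m → Fin K) : Fin m → Fin K → ℝ :=
  fun i k => if z i = k then 1 else 0

/-- The soft confusion matrix `R_{kk'}(q, q̃) = (1/m) Σ_i q_{ik} q̃_{ik'}`. -/
noncomputable def Rmat {m K : ℕ} (q qt : Fin m → Fin K → ℝ) (k k' : Fin K) : ℝ :=
  (1 / (m : ℝ)) * ∑ i, q i k * qt i k'

/-- The Poisson Kullback–Leibler divergence `KL(a, b) = a log(a/b) - (a - b)`. -/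
noncomputable def KLdiv (a b : ℝ) : ℝ := a * Real.log (a / b) - (a - b)

/-- The population separation functional
`G(q^z, q^w, μ) = Σ_{k,l,k',l'} R_{kk'}(1^{z*}, q^z) R_{ll'}(1^{w*}, q^w) KL(μ*_{kl}, μ_{k'l'})`. -/
noncomputable def Gfun {m n K L : ℕ} (zs : Fin m → Fin K) (ws : Fin n → Fin L)
    (μs : Fin K → Fin L → ℝ)
    (qz : Fin m → Fin K → ℝ) (qw : Fin n → Fin L → ℝ) (μm : Fin K → Fin L → ℝ) : ℝ :=
  ∑ k, ∑ l, ∑ k', ∑ l',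
    Rmat (indic zs) qz k k' * Rmat (indic ws) qw l l' * KLdiv (μs k l) (μm k' l')

/-- The distance between two triples `(q^z, q^w, μ)` and `(q̃^z, q̃^w, μ̃)`. -/
noncomputable def distTriple {m n K L : ℕ}
    (qz : Fin m → Fin K → ℝ) (qw : Fin n → Fin L → ℝ) (μm : Fin K → Fin L → ℝ)
    (qz' : Fin m → Fin K → ℝ) (qw' : Fin n → Fin L → ℝ) (μm' : Fin K → Fin L → ℝ) : ℝ :=
  (1 - ∑ k, Rmat qz qz' k k) + (1 - ∑ l, Rmat qw qw' l l) +
    ∑ k, ∑ l, |μm k l - μm' k l|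

/-- A matrix is row-stochastic if its entries lie in `[0,1]` and each row sums to `1`. -/
def RowStoch {m K : ℕ} (q : Fin m → Fin K → ℝ) : Prop :=
  (∀ i k, 0 ≤ q i k ∧ q i k ≤ 1) ∧ (∀ i, ∑ k, q i k = 1)

end DCLBM

section Aux

lemma log_ge_one_sub_inv {x : ℝ} (hx : 0 < x) : 1 - 1/x ≤ Real.log x := by
  have h := Real.log_le_sub_one_of_pos (show (0:ℝ) < 1/x by positivity)
  rw [Real.log_div one_ne_zero (ne_of_gt hx), Real.log_one] at h
  linarith

lemma KL_ge_sq_sqrt {a b : ℝ} (ha : 0 < a) (hb : 0 < b) :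
    (Real.sqrt a - Real.sqrt b)^2 ≤ DCLBM.KLdiv a b := by
  have hsa : 0 < Real.sqrt a := Real.sqrt_pos.2 ha
  have hsb : 0 < Real.sqrt b := Real.sqrt_pos.2 hb
  have ha' : Real.sqrt a ^ 2 = a := Real.sq_sqrt ha.le
  have hb' : Real.sqrt b ^ 2 = b := Real.sq_sqrt hb.le
  have h1 : Real.log (a/b) = 2 * Real.log (Real.sqrt a / Real.sqrt b) := by
    rw [Real.log_div (ne_of_gt ha) (ne_of_gt hb),
        Real.log_div (ne_of_gt hsa) (ne_of_gt hsb),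
        Real.log_sqrt ha.le, Real.log_sqrt hb.le]
    ring
  have h2 := log_ge_one_sub_inv (div_pos hsa hsb)
  rw [one_div_div] at h2
  have h3 : 2 * (1 - Real.sqrt b / Real.sqrt a) ≤ Real.log (a/b) := by
    rw [h1]; linarith
  have h4 := mul_le_mul_of_nonneg_left h3 ha.le
  have h5 : a * (2 * (1 - Real.sqrt b / Real.sqrt a)) = 2*a - 2 * Real.sqrt a * Real.sqrt b := by
    field_simp
    nlinarith [ha', hb']
  unfold DCLBM.KLdiv
  nlinarith [h4, h5, ha', hb']

lemma KL_nonneg {a b : ℝ} (ha : 0 < a) (hb : 0 < b) : 0 ≤ DCLBM.KLdiv a b :=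
  le_trans (sq_nonneg _) (KL_ge_sq_sqrt ha hb)

lemma sq_le_KL {a b M : ℝ} (ha : 0 < a) (hb : 0 < b) (haM : a ≤ M) (hbM : b ≤ M) :
    (a - b)^2 ≤ 4 * M * DCLBM.KLdiv a b := by
  have ha' : Real.sqrt a ^ 2 = a := Real.sq_sqrt ha.le
  have hb' : Real.sqrt b ^ 2 = b := Real.sq_sqrt hb.le
  have h := KL_ge_sq_sqrt ha hb
  have hM : 0 < M := lt_of_lt_of_le ha haM
  nlinarith [sq_nonneg (Real.sqrt a - Real.sqrt b), sq_nonneg (Real.sqrt a + Real.sqrt b),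
    KL_nonneg ha hb, sq_nonneg ((Real.sqrt a - Real.sqrt b)*(Real.sqrt a + Real.sqrt b))]

lemma exists_gap {K L : ℕ} (hK : 0 < K) (hL : 0 < L) (μs : Fin K → Fin L → ℝ)
    (hrows : ∀ k k' : Fin K, k ≠ k' → ∃ l, μs k l ≠ μs k' l)
    (hcols : ∀ l l' : Fin L, l ≠ l' → ∃ k, μs k l ≠ μs k l') :
    ∃ ρ : ℝ, 0 < ρ ∧ ρ ≤ 1 ∧
      (∀ k k', k ≠ k' → ∃ l, ρ ≤ |μs k l - μs k' l|) ∧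
      (∀ l l', l ≠ l' → ∃ k, ρ ≤ |μs k l - μs k l'|) := by
  classical
  haveI : Nonempty (Fin K) := Fin.pos_iff_nonempty.mp hK
  haveI : Nonempty (Fin L) := Fin.pos_iff_nonempty.mp hL
  have hneK : (Finset.univ : Finset (Fin K)).Nonempty := Finset.univ_nonempty
  have hneL : (Finset.univ : Finset (Fin L)).Nonempty := Finset.univ_nonempty
  set g : Fin K → Fin K → ℝ := fun k k' => Finset.univ.sup' hneL (fun l => |μs k l - μs k' l|)
    with hgdef
  set g' : Fin L → Fin L → ℝ := fun l l' => Finset.univ.sup' hneK (fun k => |μs k l - μs k l'|)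
    with hg'def
  set S : Finset ℝ := insert 1
      ((((Finset.univ ×ˢ Finset.univ).filter fun p : Fin K × Fin K => p.1 ≠ p.2).image
          fun p => g p.1 p.2) ∪
       (((Finset.univ ×ˢ Finset.univ).filter fun p : Fin L × Fin L => p.1 ≠ p.2).image
          fun p => g' p.1 p.2)) with hSdef
  have hSne : S.Nonempty := ⟨1, Finset.mem_insert_self _ _⟩
  have hpos : ∀ x ∈ S, 0 < x := by
    intro x hx
    rw [hSdef, Finset.mem_insert, Finset.mem_union] at hx
    rcases hx with rfl | hx | hx
    · exact one_pos
    · obtain ⟨p, hp, rfl⟩ := Finset.mem_image.mp hx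
      obtain ⟨l, hl⟩ := hrows p.1 p.2 (Finset.mem_filter.mp hp).2
      calc (0:ℝ) < |μs p.1 l - μs p.2 l| := by
              rw [abs_pos]; exact sub_ne_zero_of_ne hl
        _ ≤ g p.1 p.2 := by exact Finset.le_sup' (fun l => |μs p.1 l - μs p.2 l|) (Finset.mem_univ l)
    · obtain ⟨p, hp, rfl⟩ := Finset.mem_image.mp hx
      obtain ⟨k, hk⟩ := hcols p.1 p.2 (Finset.mem_filter.mp hp).2
      calc (0:ℝ) < |μs k p.1 - μs k p.2| := by
              rw [abs_pos]; exact sub_ne_zero_of_ne hk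
        _ ≤ g' p.1 p.2 := by exact Finset.le_sup' (fun k => |μs k p.1 - μs k p.2|) (Finset.mem_univ k)
  refine ⟨S.min' hSne, hpos _ (S.min'_mem hSne), S.min'_le _ (Finset.mem_insert_self _ _),
    ?_, ?_⟩
  · intro k k' hkk'
    have hmem : g k k' ∈ S := by
      rw [hSdef, Finset.mem_insert, Finset.mem_union]
      exact Or.inr (Or.inl (Finset.mem_image.mpr ⟨(k, k'),
        Finset.mem_filter.mpr ⟨Finset.mem_product.mpr ⟨Finset.mem_univ _, Finset.mem_univ _⟩, hkk'⟩,
        rfl⟩))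
    obtain ⟨l, _, hl⟩ := Finset.exists_mem_eq_sup' hneL (fun l => |μs k l - μs k' l|)
    exact ⟨l, by calc S.min' hSne ≤ g k k' := S.min'_le _ hmem
                   _ = |μs k l - μs k' l| := hl⟩
  · intro l l' hll'
    have hmem : g' l l' ∈ S := by
      rw [hSdef, Finset.mem_insert, Finset.mem_union]
      exact Or.inr (Or.inr (Finset.mem_image.mpr ⟨(l, l'),
        Finset.mem_filter.mpr ⟨Finset.mem_product.mpr ⟨Finset.mem_univ _, Finset.mem_univ _⟩, hll'⟩,
        rfl⟩))
    obtain ⟨k, _, hk⟩ := Finset.exists_mem_eq_sup' hneK (fun k => |μs k l - μs k l'|)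
    exact ⟨k, by calc S.min' hSne ≤ g' l l' := S.min'_le _ hmem
                   _ = |μs k l - μs k l'| := hk⟩

lemma Rmat_nonneg {m K : ℕ} (zs : Fin m → Fin K) (qz : Fin m → Fin K → ℝ)
    (hq : DCLBM.RowStoch qz) (k k' : Fin K) : 0 ≤ DCLBM.Rmat (DCLBM.indic zs) qz k k' := by
  unfold DCLBM.Rmat DCLBM.indic
  apply mul_nonneg (by positivity)
  apply Finset.sum_nonneg
  intro i _
  exact mul_nonneg (by split <;> norm_num) (hq.1 i k').1

lemma rowsum_Rmat {m K : ℕ} (zs : Fin m → Fin K) (qz : Fin m → Fin K → ℝ)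
    (hq : DCLBM.RowStoch qz) (k : Fin K) :
    ∑ k', DCLBM.Rmat (DCLBM.indic zs) qz k k' =
      ((Finset.univ.filter (fun i => zs i = k)).card : ℝ) / m := by
  unfold DCLBM.Rmat
  rw [← Finset.mul_sum, Finset.sum_comm]
  have h1 : ∀ i, ∑ k', DCLBM.indic zs i k * qz i k' = DCLBM.indic zs i k := by
    intro i
    rw [← Finset.mul_sum, hq.2 i, mul_one]
  rw [Finset.sum_congr rfl (fun i _ => h1 i)]
  unfold DCLBM.indic
  rw [Finset.sum_boole]
  ring

lemma tot_Rmat {m K : ℕ} (hm : 0 < m) (zs : Fin m → Fin K) (qz : Fin m → Fin K → ℝ)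
    (hq : DCLBM.RowStoch qz) :
    ∑ k, ∑ k', DCLBM.Rmat (DCLBM.indic zs) qz k k' = 1 := by
  rw [Finset.sum_congr rfl (fun k _ => rowsum_Rmat zs qz hq k)]
  rw [← Finset.sum_div]
  rw [div_eq_one_iff_eq (by positivity : (m:ℝ) ≠ 0)]
  rw [← Nat.cast_sum]
  norm_cast
  exact (Finset.card_eq_sum_card_fiberwise (f := zs) (fun i _ => Finset.mem_univ (zs i))).symm.trans
    (by simp)

end Aux


/-- Theorem 2, separability: if `μ*` has entries in `[μ_min, μ_max]` with
pairwise distinct rows and columns, then for every `δ > 0` there is `B(δ) > 0` such that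
for all sizes `m, n`, all labels with class sizes `≥ c·m` (resp. `≥ c·n`), and all feasible
triples `(q^z, q^w, μ)` at distance `≥ δ` from the whole equivalence class of
`(1^{z*}, 1^{w*}, μ*)`, one has `G(q^z, q^w, μ) ≥ B`. -/
theorem statement8 (K L : ℕ) (hK : 0 < K) (hL : 0 < L)
    (c : ℝ) (hc : 0 < c)
    (μmin μmax : ℝ) (hμmin : 0 < μmin) (hμminmax : μmin ≤ μmax)
    (μs : Fin K → Fin L → ℝ)
    (hμs : ∀ k l, μmin ≤ μs k l ∧ μs k l ≤ μmax)
    (hrows : ∀ k k' : Fin K, k ≠ k' → ∃ l, μs k l ≠ μs k' l)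
    (hcols : ∀ l l' : Fin L, l ≠ l' → ∃ k, μs k l ≠ μs k l')
    (δ : ℝ) (hδ : 0 < δ) :
    ∃ B : ℝ, 0 < B ∧
      ∀ (m n : ℕ), 0 < m → 0 < n →
      ∀ (zs : Fin m → Fin K) (ws : Fin n → Fin L),
        (∀ k, c * m ≤ ((Finset.univ.filter (fun i => zs i = k)).card : ℝ)) →
        (∀ l, c * n ≤ ((Finset.univ.filter (fun j => ws j = l)).card : ℝ)) →
      ∀ (qz : Fin m → Fin K → ℝ) (qw : Fin n → Fin L → ℝ) (μm : Fin K → Fin L → ℝ),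
        DCLBM.RowStoch qz → DCLBM.RowStoch qw →
        (∀ k l, μmin ≤ μm k l ∧ μm k l ≤ μmax) →
        (∀ (s : Equiv.Perm (Fin K)) (t : Equiv.Perm (Fin L)),
          δ ≤ DCLBM.distTriple qz qw μm
            (fun i k => if zs i = s k then 1 else 0)
            (fun j l => if ws j = t l then 1 else 0)
            (fun k l => μs (s k) (t l))) →
        B ≤ DCLBM.Gfun zs ws μs qz qw μm := by
  classical
  haveI : Nonempty (Fin K) := Fin.pos_iff_nonempty.mp hK
  haveI : Nonempty (Fin L) := Fin.pos_iff_nonempty.mp hL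
  set Kr : ℝ := (K : ℝ) with hKrdef
  set Lr : ℝ := (L : ℝ) with hLrdef
  have hKr : (1:ℝ) ≤ Kr := by rw [hKrdef]; exact_mod_cast hK
  have hLr : (1:ℝ) ≤ Lr := by rw [hLrdef]; exact_mod_cast hL
  have hKrpos : (0:ℝ) < Kr := lt_of_lt_of_le one_pos hKr
  have hLrpos : (0:ℝ) < Lr := lt_of_lt_of_le one_pos hLr
  have hμmaxpos : 0 < μmax := lt_of_lt_of_le hμmin hμminmax
  have hKne : Kr ≠ 0 := ne_of_gt hKrpos
  have hLne : Lr ≠ 0 := ne_of_gt hLrpos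
  have hμmaxne : μmax ≠ 0 := ne_of_gt hμmaxpos
  obtain ⟨ρ, hρpos, hρ1, hρrow, hρcol⟩ := exists_gap hK hL μs hrows hcols
  set δ' : ℝ := min δ 1 with hδ'def
  have hδ'pos : 0 < δ' := lt_min hδ one_pos
  have hδ'le : δ' ≤ δ := min_le_left _ _
  set e1 : ℝ := c^2*ρ^2/(64*μmax*Kr*Lr) with he1def
  set e2 : ℝ := c^2*δ'^2/(64*μmax*Kr^3*Lr^3) with he2def
  set e3 : ℝ := c*ρ^2*δ'/(64*μmax*Kr^2*Lr) with he3def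
  set e4 : ℝ := c*ρ^2*δ'/(64*μmax*Kr*Lr^2) with he4def
  have he1 : 0 < e1 := div_pos (by positivity) (by positivity)
  have he2 : 0 < e2 := div_pos (by positivity) (by positivity)
  have he3 : 0 < e3 := div_pos (by positivity) (by positivity)
  have he4 : 0 < e4 := div_pos (by positivity) (by positivity)
  set B : ℝ := min (min e1 e2) (min e3 e4) with hBdef
  have hBpos : 0 < B := lt_min (lt_min he1 he2) (lt_min he3 he4)
  have hBe1 : B ≤ e1 := le_trans (min_le_left _ _) (min_le_left _ _)
  have hBe2 : B ≤ e2 := le_trans (min_le_left _ _) (min_le_right _ _)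
  have hBe3 : B ≤ e3 := le_trans (min_le_right _ _) (min_le_left _ _)
  have hBe4 : B ≤ e4 := le_trans (min_le_right _ _) (min_le_right _ _)
  refine ⟨B, hBpos, ?_⟩
  intro m n hm hn zs ws hzs hws qz qw μm hqz hqw hμm hdist
  by_contra hG
  push_neg at hG
  have hm' : (0:ℝ) < m := by exact_mod_cast hm
  have hn' : (0:ℝ) < n := by exact_mod_cast hn
  set P : Fin K → Fin K → ℝ := fun k k' => DCLBM.Rmat (DCLBM.indic zs) qz k k' with hPdef
  set Q : Fin L → Fin L → ℝ := fun l l' => DCLBM.Rmat (DCLBM.indic ws) qw l l' with hQdef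
  have hP0 : ∀ k k', 0 ≤ P k k' := fun k k' => Rmat_nonneg zs qz hqz k k'
  have hQ0 : ∀ l l', 0 ≤ Q l l' := fun l l' => Rmat_nonneg ws qw hqw l l'
  have hProw : ∀ k, c ≤ ∑ k', P k k' := by
    intro k
    rw [show (∑ k', P k k') = _ from rowsum_Rmat zs qz hqz k, le_div_iff₀ hm']
    exact hzs k
  have hQrow : ∀ l, c ≤ ∑ l', Q l l' := by
    intro l
    rw [show (∑ l', Q l l') = _ from rowsum_Rmat ws qw hqw l, le_div_iff₀ hn']
    exact hws l
  have hPtot : ∑ k, ∑ k', P k k' = 1 := tot_Rmat hm zs qz hqz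
  have hQtot : ∑ l, ∑ l', Q l l' = 1 := tot_Rmat hn ws qw hqw
  have hμs0 : ∀ k l, 0 < μs k l := fun k l => lt_of_lt_of_le hμmin (hμs k l).1
  have hμm0 : ∀ k l, 0 < μm k l := fun k l => lt_of_lt_of_le hμmin (hμm k l).1
  have hGeq : DCLBM.Gfun zs ws μs qz qw μm =
      ∑ k, ∑ l, ∑ k', ∑ l', P k k' * Q l l' * DCLBM.KLdiv (μs k l) (μm k' l') := rfl
  have hTnn : ∀ k l k' l', 0 ≤ P k k' * Q l l' * DCLBM.KLdiv (μs k l) (μm k' l') :=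
    fun k l k' l' => mul_nonneg (mul_nonneg (hP0 _ _) (hQ0 _ _))
      (KL_nonneg (hμs0 k l) (hμm0 k' l'))
  have hterm : ∀ k l k' l',
      P k k' * Q l l' * DCLBM.KLdiv (μs k l) (μm k' l') ≤ DCLBM.Gfun zs ws μs qz qw μm := by
    intro k l k' l'
    rw [hGeq]
    calc P k k' * Q l l' * DCLBM.KLdiv (μs k l) (μm k' l')
        ≤ ∑ l', P k k' * Q l l' * DCLBM.KLdiv (μs k l) (μm k' l') :=
          Finset.single_le_sum (fun x _ => hTnn k l k' x) (Finset.mem_univ l')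
      _ ≤ ∑ k', ∑ l', P k k' * Q l l' * DCLBM.KLdiv (μs k l) (μm k' l') :=
          Finset.single_le_sum
            (fun x _ => Finset.sum_nonneg fun y _ => hTnn k l x y) (Finset.mem_univ k')
      _ ≤ ∑ l, ∑ k', ∑ l', P k k' * Q l l' * DCLBM.KLdiv (μs k l) (μm k' l') :=
          Finset.single_le_sum
            (fun x _ => Finset.sum_nonneg fun y _ => Finset.sum_nonneg fun z _ => hTnn k x y z)
            (Finset.mem_univ l)
      _ ≤ ∑ k, ∑ l, ∑ k', ∑ l', P k k' * Q l l' * DCLBM.KLdiv (μs k l) (μm k' l') :=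
          Finset.single_le_sum
            (fun x _ => Finset.sum_nonneg fun w _ => Finset.sum_nonneg fun y _ =>
              Finset.sum_nonneg fun z _ => hTnn x w y z)
            (Finset.mem_univ k)
  have hE : ∀ k l k' l', P k k' * Q l l' * (μs k l - μm k' l')^2 ≤ 4*μmax*B := by
    intro k l k' l'
    have h1 : (μs k l - μm k' l')^2 ≤ 4 * μmax * DCLBM.KLdiv (μs k l) (μm k' l') :=
      sq_le_KL (hμs0 k l) (hμm0 k' l') (hμs k l).2 (hμm k' l').2
    have h2 := mul_le_mul_of_nonneg_left h1 (mul_nonneg (hP0 k k') (hQ0 l l'))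
    have h3 := hterm k l k' l'
    have h4 : P k k' * Q l l' * (μs k l - μm k' l')^2
        ≤ 4 * μmax * (P k k' * Q l l' * DCLBM.KLdiv (μs k l) (μm k' l')) := by
      rw [show (4:ℝ) * μmax * (P k k' * Q l l' * DCLBM.KLdiv (μs k l) (μm k' l'))
          = P k k' * Q l l' * (4 * μmax * DCLBM.KLdiv (μs k l) (μm k' l')) from by ring]
      exact h2
    have h5 : 4 * μmax * (P k k' * Q l l' * DCLBM.KLdiv (μs k l) (μm k' l'))
        ≤ 4 * μmax * DCLBM.Gfun zs ws μs qz qw μm :=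
      mul_le_mul_of_nonneg_left h3 (by positivity : (0:ℝ) ≤ 4*μmax)
    have h6 : 4 * μmax * DCLBM.Gfun zs ws μs qz qw μm ≤ 4 * μmax * B :=
      mul_le_mul_of_nonneg_left hG.le (by positivity : (0:ℝ) ≤ 4*μmax)
    linarith
  -- choose f, g
  have hfex : ∀ k, ∃ k', c/Kr ≤ P k k' := by
    intro k
    by_contra h
    push_neg at h
    have h2 := Finset.sum_lt_sum_of_nonempty (Finset.univ_nonempty (α := Fin K))
      (fun k' _ => h k')
    rw [Finset.sum_const, Finset.card_univ, Fintype.card_fin, nsmul_eq_mul] at h2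
    have : (K:ℝ) * (c/Kr) = c := by field_simp; rfl
    rw [this] at h2
    exact absurd (hProw k) (not_le.mpr h2)
  have hgex : ∀ l, ∃ l', c/Lr ≤ Q l l' := by
    intro l
    by_contra h
    push_neg at h
    have h2 := Finset.sum_lt_sum_of_nonempty (Finset.univ_nonempty (α := Fin L))
      (fun l' _ => h l')
    rw [Finset.sum_const, Finset.card_univ, Fintype.card_fin, nsmul_eq_mul] at h2
    have : (L:ℝ) * (c/Lr) = c := by field_simp; rfl
    rw [this] at h2
    exact absurd (hQrow l) (not_le.mpr h2)
  choose f hfP using hfex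
  choose g hgQ using hgex
  -- master bound on the matched entries
  have hmaster : ∀ k l, c^2 * (μs k l - μm (f k) (g l))^2 ≤ 4*μmax*B*(Kr*Lr) := by
    intro k l
    have h1 : (c/Kr)*(c/Lr) ≤ P k (f k) * Q l (g l) :=
      mul_le_mul (hfP k) (hgQ l) (by positivity) (hP0 _ _)
    have h2 := mul_le_mul_of_nonneg_right h1 (sq_nonneg (μs k l - μm (f k) (g l)))
    have h3 := le_trans h2 (hE k l (f k) (g l))
    have h4 := mul_le_mul_of_nonneg_left h3 (le_of_lt (mul_pos hKrpos hLrpos))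
    have hKL : Kr*Lr*((c/Kr)*(c/Lr)) = c^2 := by
      field_simp [hKne, hLne]
    have h5 : Kr*Lr*((c/Kr)*(c/Lr)*(μs k l - μm (f k) (g l))^2)
        = c^2*(μs k l - μm (f k) (g l))^2 := by
      rw [show Kr*Lr*((c/Kr)*(c/Lr)*(μs k l - μm (f k) (g l))^2)
          = (Kr*Lr*((c/Kr)*(c/Lr)))*(μs k l - μm (f k) (g l))^2 from by ring, hKL]
    calc c^2 * (μs k l - μm (f k) (g l))^2 = _ := h5.symm
      _ ≤ Kr*Lr*(4*μmax*B) := h4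
      _ = 4*μmax*B*(Kr*Lr) := by ring
  have habs : ∀ (x y : ℝ), x^2 ≤ y^2 → 0 ≤ y → |x| ≤ y := by
    intro x y h hy
    have := Real.sqrt_le_sqrt h
    rwa [Real.sqrt_sq_eq_abs, Real.sqrt_sq hy] at this
  have hA : ∀ k l, |μs k l - μm (f k) (g l)| ≤ ρ/4 := by
    intro k l
    apply habs _ _ _ (by positivity)
    have h1 := hmaster k l
    have h2 : 4*μmax*B*(Kr*Lr) ≤ 4*μmax*e1*(Kr*Lr) :=
      mul_le_mul_of_nonneg_right
        (mul_le_mul_of_nonneg_left hBe1 (by positivity : (0:ℝ) ≤ 4*μmax))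
        (le_of_lt (mul_pos hKrpos hLrpos))
    have h3 : 4*μmax*e1*(Kr*Lr) = c^2*(ρ/4)^2 := by
      rw [he1def]; field_simp [hKne, hLne, hμmaxne]; ring
    have h4 : c^2 * (μs k l - μm (f k) (g l))^2 ≤ c^2*(ρ/4)^2 := by linarith
    exact le_of_mul_le_mul_left (by linarith [h4]) (by positivity : (0:ℝ) < c^2)
  have hAδ : ∀ k l, |μs k l - μm (f k) (g l)| ≤ δ'/(4*Kr*Lr) := by
    intro k l
    apply habs _ _ _ (by positivity)
    have h1 := hmaster k l
    have h2 : 4*μmax*B*(Kr*Lr) ≤ 4*μmax*e2*(Kr*Lr) :=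
      mul_le_mul_of_nonneg_right
        (mul_le_mul_of_nonneg_left hBe2 (by positivity : (0:ℝ) ≤ 4*μmax))
        (le_of_lt (mul_pos hKrpos hLrpos))
    have h3 : 4*μmax*e2*(Kr*Lr) = c^2*(δ'/(4*Kr*Lr))^2 := by
      rw [he2def]; field_simp [hKne, hLne, hμmaxne]; ring
    have h4 : c^2 * (μs k l - μm (f k) (g l))^2 ≤ c^2*(δ'/(4*Kr*Lr))^2 := by linarith
    exact le_of_mul_le_mul_left (by linarith [h4]) (by positivity : (0:ℝ) < c^2)
  -- injectivity
  have hfinj : Function.Injective f := by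
    intro k k' hkk'
    by_contra hne
    obtain ⟨l, hl⟩ := hρrow k k' hne
    have h1 := hA k l
    have h2 := hA k' l
    rw [hkk'] at h1
    have h3 := abs_sub_le (μs k l) (μm (f k') (g l)) (μs k' l)
    rw [abs_sub_comm (μm (f k') (g l)) (μs k' l)] at h3
    linarith
  have hginj : Function.Injective g := by
    intro l l' hll'
    by_contra hne
    obtain ⟨k, hk⟩ := hρcol l l' hne
    have h1 := hA k l
    have h2 := hA k l'
    rw [hll'] at h1
    have h3 := abs_sub_le (μs k l) (μm (f k) (g l')) (μs k l')
    rw [abs_sub_comm (μm (f k) (g l')) (μs k l')] at h3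
    linarith
  set e : Fin K ≃ Fin K := Equiv.ofBijective f (Finite.injective_iff_bijective.mp hfinj)
    with hedef
  set e' : Fin L ≃ Fin L := Equiv.ofBijective g (Finite.injective_iff_bijective.mp hginj)
    with he'def
  have hefk : ∀ k, e k = f k := fun k => rfl
  have he'gl : ∀ l, e' l = g l := fun l => rfl
  -- off-diagonal bounds
  have hoffP : ∀ k k', k' ≠ f k → P k k' ≤ δ'/(4*Kr^2) := by
    intro k k' hne
    have hfk' : f (e.symm k') = k' := by rw [← hefk]; exact e.apply_symm_apply k'
    have hkne : k ≠ e.symm k' := by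
      intro h
      exact hne (by rw [← hfk', ← h])
    obtain ⟨l, hl⟩ := hρrow k (e.symm k') hkne
    have h1 := hA (e.symm k') l
    rw [hfk'] at h1
    have hfar : ρ/2 ≤ |μs k l - μm k' (g l)| := by
      have h3 := abs_sub_le (μs k l) (μm k' (g l)) (μs (e.symm k') l)
      rw [abs_sub_comm (μm k' (g l)) (μs (e.symm k') l)] at h3
      linarith
    have hfar2 : (ρ/2)^2 ≤ (μs k l - μm k' (g l))^2 := by
      calc (ρ/2)^2 ≤ |μs k l - μm k' (g l)|^2 := by
            apply pow_le_pow_left₀ (by positivity) hfar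
        _ = (μs k l - μm k' (g l))^2 := sq_abs _
    have h2 := hE k l k' (g l)
    have h3 : P k k' * ((c/Lr) * (ρ/2)^2) ≤ P k k' * (Q l (g l) * (μs k l - μm k' (g l))^2) :=
      mul_le_mul_of_nonneg_left
        (mul_le_mul (hgQ l) hfar2 (by positivity) (hQ0 _ _)) (hP0 _ _)
    have h4 : P k k' * (Q l (g l) * (μs k l - μm k' (g l))^2)
        = P k k' * Q l (g l) * (μs k l - μm k' (g l))^2 := by ring
    have h5 : (4:ℝ)*μmax*e3 = (c/Lr)*(ρ/2)^2*(δ'/(4*Kr^2)) := by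
      rw [he3def]; field_simp [hKne, hLne, hμmaxne]; ring
    have h6 : 4*μmax*B ≤ 4*μmax*e3 :=
      mul_le_mul_of_nonneg_left hBe3 (by positivity : (0:ℝ) ≤ 4*μmax)
    have h7 : P k k' * ((c/Lr) * (ρ/2)^2) ≤ ((c/Lr) * (ρ/2)^2) * (δ'/(4*Kr^2)) := by
      rw [← h5]; linarith [h3, h4 ▸ h2]
    have hX : (0:ℝ) < (c/Lr) * (ρ/2)^2 := by positivity
    rw [mul_comm (P k k')] at h7
    exact le_of_mul_le_mul_left h7 hX
  have hoffQ : ∀ l l', l' ≠ g l → Q l l' ≤ δ'/(4*Lr^2) := by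
    intro l l' hne
    have hgl' : g (e'.symm l') = l' := by rw [← he'gl]; exact e'.apply_symm_apply l'
    have hlne : l ≠ e'.symm l' := by
      intro h
      exact hne (by rw [← hgl', ← h])
    obtain ⟨k, hk⟩ := hρcol l (e'.symm l') hlne
    have h1 := hA k (e'.symm l')
    rw [hgl'] at h1
    have hfar : ρ/2 ≤ |μs k l - μm (f k) l'| := by
      have h3 := abs_sub_le (μs k l) (μm (f k) l') (μs k (e'.symm l'))
      rw [abs_sub_comm (μm (f k) l') (μs k (e'.symm l'))] at h3
      linarith
    have hfar2 : (ρ/2)^2 ≤ (μs k l - μm (f k) l')^2 := by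
      calc (ρ/2)^2 ≤ |μs k l - μm (f k) l'|^2 := by
            apply pow_le_pow_left₀ (by positivity) hfar
        _ = (μs k l - μm (f k) l')^2 := sq_abs _
    have h2 := hE k l (f k) l'
    have h3 : Q l l' * ((c/Kr) * (ρ/2)^2) ≤ Q l l' * (P k (f k) * (μs k l - μm (f k) l')^2) :=
      mul_le_mul_of_nonneg_left
        (mul_le_mul (hfP k) hfar2 (by positivity) (hP0 _ _)) (hQ0 _ _)
    have h4 : Q l l' * (P k (f k) * (μs k l - μm (f k) l')^2)
        = P k (f k) * Q l l' * (μs k l - μm (f k) l')^2 := by ring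
    have h5 : (4:ℝ)*μmax*e4 = (c/Kr)*(ρ/2)^2*(δ'/(4*Lr^2)) := by
      rw [he4def]; field_simp [hKne, hLne, hμmaxne]; ring
    have h6 : 4*μmax*B ≤ 4*μmax*e4 :=
      mul_le_mul_of_nonneg_left hBe4 (by positivity : (0:ℝ) ≤ 4*μmax)
    have h7 : Q l l' * ((c/Kr) * (ρ/2)^2) ≤ ((c/Kr) * (ρ/2)^2) * (δ'/(4*Lr^2)) := by
      rw [← h5]; linarith [h3, h4 ▸ h2]
    have hX : (0:ℝ) < (c/Kr) * (ρ/2)^2 := by positivity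
    rw [mul_comm (Q l l')] at h7
    exact le_of_mul_le_mul_left h7 hX
  -- the three parts of the distance
  have hpart1 : 1 - ∑ k, P k (f k) ≤ δ'/4 := by
    have hsplit : ∀ k, ∑ k', P k k' = P k (f k) + ∑ k' ∈ Finset.univ.erase (f k), P k k' :=
      fun k => (Finset.add_sum_erase _ _ (Finset.mem_univ _)).symm
    have heq : 1 - ∑ k, P k (f k) = ∑ k, ∑ k' ∈ Finset.univ.erase (f k), P k k' := by
      rw [← hPtot, Finset.sum_congr rfl (fun k _ => hsplit k), Finset.sum_add_distrib]
      ring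
    rw [heq]
    have hinner : ∀ k, ∑ k' ∈ Finset.univ.erase (f k), P k k' ≤ Kr * (δ'/(4*Kr^2)) := by
      intro k
      calc ∑ k' ∈ Finset.univ.erase (f k), P k k'
          ≤ (Finset.univ.erase (f k)).card • (δ'/(4*Kr^2)) := by
            apply Finset.sum_le_card_nsmul
            intro k' hk'
            exact hoffP k k' (Finset.ne_of_mem_erase hk')
        _ ≤ Kr * (δ'/(4*Kr^2)) := by
            rw [nsmul_eq_mul]
            apply mul_le_mul_of_nonneg_right _ (by positivity)
            calc ((Finset.univ.erase (f k)).card : ℝ) ≤ (Finset.univ : Finset (Fin K)).card := by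
                  exact_mod_cast Finset.card_le_card (Finset.erase_subset _ _)
              _ = Kr := by rw [Finset.card_univ, Fintype.card_fin]
    calc ∑ k, ∑ k' ∈ Finset.univ.erase (f k), P k k'
        ≤ ∑ _k : Fin K, Kr * (δ'/(4*Kr^2)) := Finset.sum_le_sum (fun k _ => hinner k)
      _ = Kr * (Kr * (δ'/(4*Kr^2))) := by
          rw [Finset.sum_const, Finset.card_univ, Fintype.card_fin, nsmul_eq_mul]
      _ = δ'/4 := by field_simp [hKne, hLne]
  have hpart2 : 1 - ∑ l, Q l (g l) ≤ δ'/4 := by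
    have hsplit : ∀ l, ∑ l', Q l l' = Q l (g l) + ∑ l' ∈ Finset.univ.erase (g l), Q l l' :=
      fun l => (Finset.add_sum_erase _ _ (Finset.mem_univ _)).symm
    have heq : 1 - ∑ l, Q l (g l) = ∑ l, ∑ l' ∈ Finset.univ.erase (g l), Q l l' := by
      rw [← hQtot, Finset.sum_congr rfl (fun l _ => hsplit l), Finset.sum_add_distrib]
      ring
    rw [heq]
    have hinner : ∀ l, ∑ l' ∈ Finset.univ.erase (g l), Q l l' ≤ Lr * (δ'/(4*Lr^2)) := by
      intro l
      calc ∑ l' ∈ Finset.univ.erase (g l), Q l l'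
          ≤ (Finset.univ.erase (g l)).card • (δ'/(4*Lr^2)) := by
            apply Finset.sum_le_card_nsmul
            intro l' hl'
            exact hoffQ l l' (Finset.ne_of_mem_erase hl')
        _ ≤ Lr * (δ'/(4*Lr^2)) := by
            rw [nsmul_eq_mul]
            apply mul_le_mul_of_nonneg_right _ (by positivity)
            calc ((Finset.univ.erase (g l)).card : ℝ) ≤ (Finset.univ : Finset (Fin L)).card := by
                  exact_mod_cast Finset.card_le_card (Finset.erase_subset _ _)
              _ = Lr := by rw [Finset.card_univ, Fintype.card_fin]
    calc ∑ l, ∑ l' ∈ Finset.univ.erase (g l), Q l l'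
        ≤ ∑ _l : Fin L, Lr * (δ'/(4*Lr^2)) := Finset.sum_le_sum (fun l _ => hinner l)
      _ = Lr * (Lr * (δ'/(4*Lr^2))) := by
          rw [Finset.sum_const, Finset.card_univ, Fintype.card_fin, nsmul_eq_mul]
      _ = δ'/4 := by field_simp [hKne, hLne]
  have hpart3 : ∑ k, ∑ l, |μm k l - μs (e.symm k) (e'.symm l)| ≤ δ'/4 := by
    have hterm3 : ∀ k l, |μm k l - μs (e.symm k) (e'.symm l)| ≤ δ'/(4*Kr*Lr) := by
      intro k l
      have h1 := hAδ (e.symm k) (e'.symm l)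
      have hf : f (e.symm k) = k := by rw [← hefk]; exact e.apply_symm_apply k
      have hg : g (e'.symm l) = l := by rw [← he'gl]; exact e'.apply_symm_apply l
      rw [hf, hg] at h1
      rwa [abs_sub_comm]
    calc ∑ k, ∑ l, |μm k l - μs (e.symm k) (e'.symm l)|
        ≤ ∑ _k : Fin K, ∑ _l : Fin L, δ'/(4*Kr*Lr) :=
          Finset.sum_le_sum (fun k _ => Finset.sum_le_sum (fun l _ => hterm3 k l))
      _ = Kr * (Lr * (δ'/(4*Kr*Lr))) := by
          simp [Finset.sum_const, Finset.card_univ, Fintype.card_fin, nsmul_eq_mul]; rfl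
      _ = δ'/4 := by field_simp [hKne, hLne]
  -- assemble
  have hd := hdist e.symm e'.symm
  have hR1 : ∑ k, DCLBM.Rmat qz (fun i k => if zs i = e.symm k then 1 else 0) k k
      = ∑ k, P k (f k) := by
    have hstep : ∀ k : Fin K,
        DCLBM.Rmat qz (fun i k => if zs i = e.symm k then 1 else 0) k k = P (e.symm k) k := by
      intro k
      simp only [hPdef, DCLBM.Rmat, DCLBM.indic]
      congr 1
      exact Finset.sum_congr rfl fun i _ => by ring
    rw [Finset.sum_congr rfl (fun k _ => hstep k)]
    exact (Fintype.sum_equiv e (fun x => P x (f x)) (fun k => P (e.symm k) k)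
      (fun x => by show P x (f x) = P (e.symm (e x)) (e x)
                   rw [Equiv.symm_apply_apply]
                   exact rfl)).symm
  have hR2 : ∑ l, DCLBM.Rmat qw (fun j l => if ws j = e'.symm l then 1 else 0) l l
      = ∑ l, Q l (g l) := by
    have hstep : ∀ l : Fin L,
        DCLBM.Rmat qw (fun j l => if ws j = e'.symm l then 1 else 0) l l = Q (e'.symm l) l := by
      intro l
      simp only [hQdef, DCLBM.Rmat, DCLBM.indic]
      congr 1
      exact Finset.sum_congr rfl fun j _ => by ring
    rw [Finset.sum_congr rfl (fun l _ => hstep l)]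
    exact (Fintype.sum_equiv e' (fun x => Q x (g x)) (fun l => Q (e'.symm l) l)
      (fun x => by show Q x (g x) = Q (e'.symm (e' x)) (e' x)
                   rw [Equiv.symm_apply_apply]
                   exact rfl)).symm
  unfold DCLBM.distTriple at hd
  rw [hR1, hR2] at hd
  have : δ ≤ 3*(δ'/4) := le_trans hd (by linarith [hpart1, hpart2, hpart3])
  have hδδ' : δ' ≤ δ := hδ'le
  linarith
end

section
/- Suppose every value in {1,…,K} is attained by z* and every value in {1,…,L} is attained by w*, and suppose μ* ∈ (0,∞)^{K×L} has pairwise distinct rows and pairwise distinct columns. If q^z is an m×K row-stochastic matrix, q^w is an n×L row-stochastic matrix, μ ∈ (0,∞)^{K×L}, and G(q^z, q^w, μ) = 0, then (q^z, q^w, μ) belongs to the equivalence class of (1^{z*}, 1^{w*}, μ*); that is, there exist permutations s of {1,…,K} and t of {1,…,L} with q^z_{ik} = 1(z*_i = s(k)) for all i,k, q^w_{jl} = 1(w*_j = t(l)) for all j,l, and μ_{kl} = μ*_{s(k),t(l)} for all k,l. -/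
/-!
Every summand of `G` is a product of nonnegative confusion weights and a Poisson divergence,
which vanishes only on equal arguments. So `G = 0` forces `μ_{k'l'} = μ*_{z*_i, w*_j}` whenever
`q^z_{ik'} > 0` and `q^w_{jl'} > 0`. Since the rows of `μ*` are distinct and every column cluster is
occupied, rows with different true labels cannot both charge the same column `k'` of `q^z`.
Choosing for each true cluster a charged column gives an injection, hence a permutation of the
clusters, and the row sums then force `q^z` to be the permuted hard assignment; symmetrically for
`q^w`, and comparing `μ` with `μ*` on charged pairs gives the last claim.
-/

open scoped BigOperators

open Finset Function InformationTheory

namespace DCLBM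

lemma KLdiv_eq_mul_klFun {a b : ℝ} (hb : 0 < b) : KLdiv a b = b * klFun (a / b) := by
  unfold KLdiv klFun
  field_simp
  ring

lemma KLdiv_nonneg {a b : ℝ} (ha : 0 < a) (hb : 0 < b) : 0 ≤ KLdiv a b := by
  rw [KLdiv_eq_mul_klFun hb]
  exact mul_nonneg hb.le (klFun_nonneg (div_pos ha hb).le)

lemma KLdiv_eq_zero_iff {a b : ℝ} (ha : 0 < a) (hb : 0 < b) : KLdiv a b = 0 ↔ a = b := by
  rw [KLdiv_eq_mul_klFun hb, mul_eq_zero, klFun_eq_zero_iff (div_pos ha hb).le,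
    div_eq_one_iff_eq hb.ne']
  exact or_iff_right hb.ne'

lemma indic_nonneg {m K : ℕ} (z : Fin m → Fin K) (i : Fin m) (k : Fin K) : 0 ≤ indic z i k := by
  unfold indic
  split_ifs <;> norm_num

lemma Rmat_indic_nonneg {m K : ℕ} (z : Fin m → Fin K) {q : Fin m → Fin K → ℝ}
    (hq : ∀ i k, 0 ≤ q i k) (k k' : Fin K) : 0 ≤ Rmat (indic z) q k k' :=
  mul_nonneg (by positivity) (sum_nonneg fun i _ => mul_nonneg (indic_nonneg z i k) (hq i k'))

lemma Rmat_indic_pos {m K : ℕ} (z : Fin m → Fin K) {q : Fin m → Fin K → ℝ}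
    (hq : ∀ i k, 0 ≤ q i k) {i : Fin m} {k : Fin K} (h : 0 < q i k) :
    0 < Rmat (indic z) q (z i) k := by
  have hm : (0 : ℝ) < m := by exact_mod_cast i.pos
  refine mul_pos (by positivity) (h.trans_le ?_)
  simpa [indic] using single_le_sum (fun j _ => mul_nonneg (indic_nonneg z j (z i)) (hq j k))
    (mem_univ i)

lemma RowStoch.exists_pos {m K : ℕ} {q : Fin m → Fin K → ℝ} (hq : RowStoch q) (i : Fin m) :
    ∃ k, 0 < q i k := by
  have : ∑ _k : Fin K, (0 : ℝ) < ∑ k, q i k := by simp [hq.2 i]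
  simpa using exists_lt_of_sum_lt this

lemma RowStoch.exists_perm_eq_indic {m K : ℕ} {z : Fin m → Fin K} (hz : Surjective z)
    {q : Fin m → Fin K → ℝ} (hq : RowStoch q)
    (hcol : ∀ i i' k, 0 < q i k → 0 < q i' k → z i = z i') :
    ∃ s : Equiv.Perm (Fin K), ∀ i k, q i k = if z i = s k then 1 else 0 := by
  choose r hr using hz
  choose f hf using fun k => hq.exists_pos (r k)
  have hf_inj : Injective f := fun k₁ k₂ h => by
    rw [← hr k₁, ← hr k₂]
    exact hcol _ _ _ (hf k₁) (h ▸ hf k₂)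
  set e := Equiv.ofBijective f hf_inj.bijective_of_finite
  have hlabel : ∀ i k, 0 < q i k → z i = e.symm k := fun i k h => by
    rw [← hr (e.symm k)]
    have hpos := hf (e.symm k)
    rw [show f (e.symm k) = k from e.apply_symm_apply k] at hpos
    exact hcol _ _ _ h hpos
  have hzero : ∀ i k, z i ≠ e.symm k → q i k = 0 := fun i k h =>
    le_antisymm (not_lt.mp (mt (hlabel i k) h)) (hq.1 i k).1
  refine ⟨e.symm, fun i k => ?_⟩
  split_ifs with h
  · rw [← hq.2 i, sum_eq_single k (fun k' _ hk' => hzero i k' fun h' => hk' ?_) (by simp)]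
    exact e.symm.injective (h'.symm.trans h)
  · exact hzero i k h

lemma eq_of_Gfun_eq_zero {m n K L : ℕ} {zs : Fin m → Fin K} {ws : Fin n → Fin L}
    {μs μm : Fin K → Fin L → ℝ} (hμs : ∀ k l, 0 < μs k l) (hμm : ∀ k l, 0 < μm k l)
    {qz : Fin m → Fin K → ℝ} {qw : Fin n → Fin L → ℝ}
    (hqz : ∀ i k, 0 ≤ qz i k) (hqw : ∀ j l, 0 ≤ qw j l) (hG : Gfun zs ws μs qz qw μm = 0)
    {i : Fin m} {j : Fin n} {k : Fin K} {l : Fin L} (hik : 0 < qz i k) (hjl : 0 < qw j l) :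
    μm k l = μs (zs i) (ws j) := by
  have hterm_nonneg : ∀ x : Fin K × Fin L × Fin K × Fin L,
      0 ≤ Rmat (indic zs) qz x.1 x.2.2.1 * Rmat (indic ws) qw x.2.1 x.2.2.2 *
        KLdiv (μs x.1 x.2.1) (μm x.2.2.1 x.2.2.2) := fun x =>
    mul_nonneg (mul_nonneg (Rmat_indic_nonneg zs hqz _ _) (Rmat_indic_nonneg ws hqw _ _))
      (KLdiv_nonneg (hμs _ _) (hμm _ _))
  unfold Gfun at hG
  simp only [← Fintype.sum_prod_type'] at hG
  have hterm := congrFun ((Fintype.sum_eq_zero_iff_of_nonneg hterm_nonneg).1 hG)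
    (zs i, ws j, k, l)
  simp only [Pi.zero_apply, mul_eq_zero, KLdiv_eq_zero_iff (hμs _ _) (hμm _ _)] at hterm
  exact (hterm.resolve_left (not_or.2
    ⟨(Rmat_indic_pos zs hqz hik).ne', (Rmat_indic_pos ws hqw hjl).ne'⟩)).symm

lemma label_eq_of_pos_of_pos {m n K L : ℕ} {zs : Fin m → Fin K} {ws : Fin n → Fin L}
    (hws : Surjective ws) {μs μm : Fin K → Fin L → ℝ}
    (hrows : ∀ k k' : Fin K, k ≠ k' → ∃ l, μs k l ≠ μs k' l)
    {qz : Fin m → Fin K → ℝ} {qw : Fin n → Fin L → ℝ} (hqw : RowStoch qw)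
    (hagree : ∀ i j k l, 0 < qz i k → 0 < qw j l → μm k l = μs (zs i) (ws j))
    {i i' : Fin m} {k : Fin K} (hi : 0 < qz i k) (hi' : 0 < qz i' k) : zs i = zs i' := by
  by_contra h
  obtain ⟨l, hl⟩ := hrows _ _ h
  obtain ⟨j, rfl⟩ := hws l
  obtain ⟨l', hl'⟩ := hqw.exists_pos j
  exact hl ((hagree i j k l' hi hl').symm.trans (hagree i' j k l' hi' hl'))

end DCLBM

open DCLBM

theorem statement15_general (m n K L : ℕ)
    (zs : Fin m → Fin K) (ws : Fin n → Fin L)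
    (hzsurj : Function.Surjective zs) (hwsurj : Function.Surjective ws)
    (μs : Fin K → Fin L → ℝ) (hμs : ∀ k l, 0 < μs k l)
    (hrows : ∀ k k' : Fin K, k ≠ k' → ∃ l, μs k l ≠ μs k' l)
    (hcols : ∀ l l' : Fin L, l ≠ l' → ∃ k, μs k l ≠ μs k l')
    (qz : Fin m → Fin K → ℝ) (qw : Fin n → Fin L → ℝ) (μm : Fin K → Fin L → ℝ)
    (hqz : DCLBM.RowStoch qz) (hqw : DCLBM.RowStoch qw) (hμm : ∀ k l, 0 < μm k l)
    (hG : DCLBM.Gfun zs ws μs qz qw μm = 0) :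
    ∃ (s : Equiv.Perm (Fin K)) (t : Equiv.Perm (Fin L)),
      (∀ i k, qz i k = if zs i = s k then 1 else 0) ∧
      (∀ j l, qw j l = if ws j = t l then 1 else 0) ∧
      (∀ k l, μm k l = μs (s k) (t l)) := by
  have hagree : ∀ i j k l, 0 < qz i k → 0 < qw j l → μm k l = μs (zs i) (ws j) :=
    fun _ _ _ _ => eq_of_Gfun_eq_zero hμs hμm (fun i k => (hqz.1 i k).1)
      (fun j l => (hqw.1 j l).1) hG
  obtain ⟨s, hs⟩ := hqz.exists_perm_eq_indic hzsurj fun _ _ _ =>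
    label_eq_of_pos_of_pos hwsurj hrows hqw hagree
  obtain ⟨t, ht⟩ := hqw.exists_perm_eq_indic hwsurj fun _ _ _ =>
    label_eq_of_pos_of_pos (μs := fun l k => μs k l) hzsurj hcols hqz
      fun j i l k hjl hik => hagree i j k l hik hjl
  refine ⟨s, t, hs, ht, fun k l => ?_⟩
  obtain ⟨i, hi⟩ := hzsurj (s k)
  obtain ⟨j, hj⟩ := hwsurj (t l)
  simpa [hi, hj] using hagree i j k l (by simp [hs, hi]) (by simp [ht, hj])

/-- if `z*` and `w*` are surjective, `μ*` has pairwise distinct rows and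
columns, and `G(q^z, q^w, μ) = 0` for row-stochastic `q^z, q^w` and positive `μ`, then
`(q^z, q^w, μ)` lies in the equivalence class of `(1^{z*}, 1^{w*}, μ*)`. -/
theorem statement15 (m n K L : ℕ) (hm : 0 < m) (hn : 0 < n) (hK : 0 < K) (hL : 0 < L)
    (zs : Fin m → Fin K) (ws : Fin n → Fin L)
    (hzsurj : Function.Surjective zs) (hwsurj : Function.Surjective ws)
    (μs : Fin K → Fin L → ℝ) (hμs : ∀ k l, 0 < μs k l)
    (hrows : ∀ k k' : Fin K, k ≠ k' → ∃ l, μs k l ≠ μs k' l)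
    (hcols : ∀ l l' : Fin L, l ≠ l' → ∃ k, μs k l ≠ μs k l')
    (qz : Fin m → Fin K → ℝ) (qw : Fin n → Fin L → ℝ) (μm : Fin K → Fin L → ℝ)
    (hqz : DCLBM.RowStoch qz) (hqw : DCLBM.RowStoch qw) (hμm : ∀ k l, 0 < μm k l)
    (hG : DCLBM.Gfun zs ws μs qz qw μm = 0) :
    ∃ (s : Equiv.Perm (Fin K)) (t : Equiv.Perm (Fin L)),
      (∀ i k, qz i k = if zs i = s k then 1 else 0) ∧
      (∀ j l, qw j l = if ws j = t l then 1 else 0) ∧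
      (∀ k l, μm k l = μs (s k) (t l)) :=
  statement15_general m n K L zs ws hzsurj hwsurj μs hμs hrows hcols qz qw μm hqz hqw hμm hG
end

section
/- Let Q be an m×K row-stochastic matrix and R an n×L row-stochastic matrix, and define the product probability mass functions q1(z) = ∏_{i=1}^m Q_{i,z_i} on Ω_z and q2(w) = ∏_{j=1}^n R_{j,w_j} on Ω_w. Then for every parameter tuple Φ = (π, ρ, θ, λ, μ), J(q1, q2, Φ) = −Σ_{i,j} θ_i λ_j Σ_{k,l} Q_{ik} R_{jl} μ_{kl} + Σ_{i,j} A_{ij} Σ_{k,l} Q_{ik} R_{jl} log μ_{kl} + Σ_{i,j} A_{ij} (log θ_i + log λ_j) − Σ_{i,j} log(A_{ij}!) + Σ_{i,k} Q_{ik} log π_k + Σ_{j,l} R_{jl} log ρ_l − Σ_{i,k} Q_{ik} log Q_{ik} − Σ_{j,l} R_{jl} log R_{jl}, with the convention 0·log 0 = 0. -/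
open scoped BigOperators

namespace DCLBM

/-- The DC-LBM joint likelihood `P(z, w, A; Φ)`. -/
noncomputable def Pjoint {m n K L : ℕ} (A : Fin m → Fin n → ℕ)
    (piv : Fin K → ℝ) (rhov : Fin L → ℝ) (θ : Fin m → ℝ) (lam : Fin n → ℝ)
    (μm : Fin K → Fin L → ℝ) (z : Fin m → Fin K) (w : Fin n → Fin L) : ℝ :=
  (∏ i, piv (z i)) * (∏ j, rhov (w j)) *
    ∏ i, ∏ j, Real.exp (-(θ i * lam j * μm (z i) (w j))) *
      (θ i * lam j * μm (z i) (w j)) ^ (A i j) / (Nat.factorial (A i j) : ℝ)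

/-- The variational objective `J(q1, q2, Φ)`.  (The convention `0 · log 0 = 0` is
automatic since the factor `q1 z * q2 w` multiplies the logarithm.) -/
noncomputable def Jobj {m n K L : ℕ} (A : Fin m → Fin n → ℕ)
    (q1 : (Fin m → Fin K) → ℝ) (q2 : (Fin n → Fin L) → ℝ)
    (piv : Fin K → ℝ) (rhov : Fin L → ℝ) (θ : Fin m → ℝ) (lam : Fin n → ℝ)
    (μm : Fin K → Fin L → ℝ) : ℝ :=
  ∑ z : Fin m → Fin K, ∑ w : Fin n → Fin L,
    q1 z * q2 w * Real.log (Pjoint A piv rhov θ lam μm z w / (q1 z * q2 w))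

/-- The marginal `pr_{q1}(z_i = k)`. -/
noncomputable def pr1 {m K : ℕ} (q1 : (Fin m → Fin K) → ℝ) (i : Fin m) (k : Fin K) : ℝ :=
  ∑ z : Fin m → Fin K, if z i = k then q1 z else 0

/-- The marginal `pr_{q2}(w_j = l)`. -/
noncomputable def pr2 {n L : ℕ} (q2 : (Fin n → Fin L) → ℝ) (j : Fin n) (l : Fin L) : ℝ :=
  ∑ w : Fin n → Fin L, if w j = l then q2 w else 0

end DCLBM


section AuxDCLBM

lemma dclbm_sum_pi_prod {m K : ℕ} (h : Fin m → Fin K → ℝ) :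
    ∑ z : Fin m → Fin K, ∏ i, h i (z i) = ∏ i, ∑ k, h i k :=
  (Fintype.prod_sum h).symm

lemma dclbm_coord_exp {m K : ℕ} (Q : Fin m → Fin K → ℝ) (hQs : ∀ i, ∑ k, Q i k = 1)
    (i : Fin m) (f : Fin K → ℝ) :
    ∑ z : Fin m → Fin K, (∏ i', Q i' (z i')) * f (z i) = ∑ k, Q i k * f k := by
  classical
  set h : Fin m → Fin K → ℝ := fun i' k => if i' = i then Q i' k * f k else Q i' k with hh
  have h1 : ∀ z : Fin m → Fin K, (∏ i', Q i' (z i')) * f (z i) = ∏ i', h i' (z i') := by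
    intro z
    have e1 : ∏ i', Q i' (z i') = Q i (z i) * ∏ i' ∈ Finset.univ.erase i, Q i' (z i') :=
      (Finset.mul_prod_erase _ _ (Finset.mem_univ i)).symm
    have e2 : ∏ i', h i' (z i') = h i (z i) * ∏ i' ∈ Finset.univ.erase i, h i' (z i') :=
      (Finset.mul_prod_erase _ _ (Finset.mem_univ i)).symm
    have e3 : ∏ i' ∈ Finset.univ.erase i, h i' (z i') = ∏ i' ∈ Finset.univ.erase i, Q i' (z i') :=
      Finset.prod_congr rfl (fun x hx => by simp [hh, Finset.ne_of_mem_erase hx])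
    rw [e1, e2, e3]
    simp only [hh, if_pos rfl]
    ring
  simp_rw [h1]
  rw [dclbm_sum_pi_prod h]
  rw [Finset.prod_eq_single i (fun b _ hb => by simp [hh, hb, hQs b]) (by simp)]
  simp [hh]

lemma dclbm_sum_coord_exp {m K : ℕ} (Q : Fin m → Fin K → ℝ) (hQs : ∀ i, ∑ k, Q i k = 1)
    (f : Fin m → Fin K → ℝ) :
    ∑ z : Fin m → Fin K, (∏ i, Q i (z i)) * (∑ i, f i (z i)) = ∑ i, ∑ k, Q i k * f i k := by
  simp_rw [Finset.mul_sum]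
  rw [Finset.sum_comm]
  exact Finset.sum_congr rfl fun i _ => dclbm_coord_exp Q hQs i (f i)

lemma dclbm_sum_prod_one {m K : ℕ} (Q : Fin m → Fin K → ℝ) (hQs : ∀ i, ∑ k, Q i k = 1) :
    ∑ z : Fin m → Fin K, ∏ i, Q i (z i) = 1 := by
  rw [dclbm_sum_pi_prod]
  simp [hQs]

lemma dclbm_entropy {m K : ℕ} (Q : Fin m → Fin K → ℝ) (hQs : ∀ i, ∑ k, Q i k = 1) :
    ∑ z : Fin m → Fin K, (∏ i, Q i (z i)) * Real.log (∏ i, Q i (z i))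
      = ∑ i, ∑ k, Q i k * Real.log (Q i k) := by
  rw [← dclbm_sum_coord_exp Q hQs (fun i k => Real.log (Q i k))]
  refine Finset.sum_congr rfl fun z _ => ?_
  by_cases hz : ∀ i : Fin m, Q i (z i) ≠ 0
  · rw [Real.log_prod fun i _ => hz i]
  · push_neg at hz
    obtain ⟨i0, hi0⟩ := hz
    have : ∏ i, Q i (z i) = 0 := Finset.prod_eq_zero (Finset.mem_univ i0) hi0
    simp [this]

lemma dclbm_double_coord {m n K L : ℕ} (Q : Fin m → Fin K → ℝ) (R : Fin n → Fin L → ℝ)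
    (hQs : ∀ i, ∑ k, Q i k = 1) (hRs : ∀ j, ∑ l, R j l = 1)
    (i : Fin m) (j : Fin n) (g : Fin K → Fin L → ℝ) :
    ∑ z : Fin m → Fin K, ∑ w : Fin n → Fin L,
        (∏ i', Q i' (z i')) * (∏ j', R j' (w j')) * g (z i) (w j)
      = ∑ k, ∑ l, Q i k * (R j l * g k l) := by
  have hw : ∀ z : Fin m → Fin K,
      ∑ w : Fin n → Fin L, (∏ i', Q i' (z i')) * (∏ j', R j' (w j')) * g (z i) (w j)
        = (∏ i', Q i' (z i')) * ∑ l, R j l * g (z i) l := by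
    intro z
    rw [← dclbm_coord_exp R hRs j (g (z i)), Finset.mul_sum]
    exact Finset.sum_congr rfl fun w _ => by ring
  simp_rw [hw]
  rw [dclbm_coord_exp Q hQs i (fun k => ∑ l, R j l * g k l)]
  simp_rw [Finset.mul_sum]

end AuxDCLBM

lemma dclbm_Ppos {m n K L : ℕ} (A : Fin m → Fin n → ℕ)
    (piv : Fin K → ℝ) (rhov : Fin L → ℝ) (θ : Fin m → ℝ) (lam : Fin n → ℝ)
    (μm : Fin K → Fin L → ℝ)
    (hpiv : ∀ k, 0 < piv k) (hrhov : ∀ l, 0 < rhov l)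
    (hθ : ∀ i, 0 < θ i) (hlam : ∀ j, 0 < lam j) (hμm : ∀ k l, 0 < μm k l)
    (z : Fin m → Fin K) (w : Fin n → Fin L) :
    0 < DCLBM.Pjoint A piv rhov θ lam μm z w := by
  unfold DCLBM.Pjoint
  apply mul_pos
  · exact mul_pos (Finset.prod_pos fun i _ => hpiv (z i)) (Finset.prod_pos fun j _ => hrhov (w j))
  · refine Finset.prod_pos fun i _ => Finset.prod_pos fun j _ => div_pos ?_ ?_
    · exact mul_pos (Real.exp_pos _)
        (pow_pos (mul_pos (mul_pos (hθ i) (hlam j)) (hμm (z i) (w j))) _)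
    · exact_mod_cast Nat.factorial_pos _

lemma dclbm_logP {m n K L : ℕ} (A : Fin m → Fin n → ℕ)
    (piv : Fin K → ℝ) (rhov : Fin L → ℝ) (θ : Fin m → ℝ) (lam : Fin n → ℝ)
    (μm : Fin K → Fin L → ℝ)
    (hpiv : ∀ k, 0 < piv k) (hrhov : ∀ l, 0 < rhov l)
    (hθ : ∀ i, 0 < θ i) (hlam : ∀ j, 0 < lam j) (hμm : ∀ k l, 0 < μm k l)
    (z : Fin m → Fin K) (w : Fin n → Fin L) :
    Real.log (DCLBM.Pjoint A piv rhov θ lam μm z w)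
      = (∑ i, Real.log (piv (z i))) + (∑ j, Real.log (rhov (w j)))
        + ∑ i, ∑ j, (-(θ i * lam j * μm (z i) (w j))
            + (A i j : ℝ) * (Real.log (θ i) + Real.log (lam j) + Real.log (μm (z i) (w j)))
            - Real.log (Nat.factorial (A i j) : ℝ)) := by
  have hy : ∀ (i : Fin m) (j : Fin n), (0:ℝ) < θ i * lam j * μm (z i) (w j) :=
    fun i j => mul_pos (mul_pos (hθ i) (hlam j)) (hμm (z i) (w j))
  have hterm : ∀ (i : Fin m) (j : Fin n),
      Real.exp (-(θ i * lam j * μm (z i) (w j))) *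
        (θ i * lam j * μm (z i) (w j)) ^ (A i j) / (Nat.factorial (A i j) : ℝ) ≠ 0 :=
    fun i j => ne_of_gt (div_pos (mul_pos (Real.exp_pos _) (pow_pos (hy i j) _))
      (by exact_mod_cast Nat.factorial_pos _))
  unfold DCLBM.Pjoint
  rw [Real.log_mul (ne_of_gt (mul_pos (Finset.prod_pos fun i _ => hpiv (z i))
        (Finset.prod_pos fun j _ => hrhov (w j)))) (by
        exact Finset.prod_ne_zero_iff.mpr fun i _ =>
          Finset.prod_ne_zero_iff.mpr fun j _ => hterm i j),
      Real.log_mul (ne_of_gt (Finset.prod_pos fun i _ => hpiv (z i)))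
        (ne_of_gt (Finset.prod_pos fun j _ => hrhov (w j))),
      Real.log_prod (fun i _ => ne_of_gt (hpiv (z i))),
      Real.log_prod (fun j _ => ne_of_gt (hrhov (w j))),
      Real.log_prod (fun i _ => Finset.prod_ne_zero_iff.mpr fun j _ => hterm i j)]
  congr 1
  refine Finset.sum_congr rfl fun i _ => ?_
  rw [Real.log_prod (fun j _ => hterm i j)]
  refine Finset.sum_congr rfl fun j _ => ?_
  rw [Real.log_div (mul_ne_zero (ne_of_gt (Real.exp_pos _)) (ne_of_gt (pow_pos (hy i j) _)))
        (by exact_mod_cast (Nat.factorial_pos _).ne'),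
      Real.log_mul (ne_of_gt (Real.exp_pos _)) (ne_of_gt (pow_pos (hy i j) _)),
      Real.log_exp, Real.log_pow,
      Real.log_mul (ne_of_gt (mul_pos (hθ i) (hlam j))) (ne_of_gt (hμm (z i) (w j))),
      Real.log_mul (ne_of_gt (hθ i)) (ne_of_gt (hlam j))]


/-- for product pmfs `q1(z) = ∏ᵢ Q_{i, zᵢ}` and `q2(w) = ∏ⱼ R_{j, wⱼ}`
built from row-stochastic matrices `Q` and `R`, the variational objective `J(q1, q2, Φ)`
equals the displayed closed-form expression. -/
theorem statement16 (m n K L : ℕ) (hm : 0 < m) (hn : 0 < n) (hK : 0 < K) (hL : 0 < L)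
    (A : Fin m → Fin n → ℕ)
    (piv : Fin K → ℝ) (rhov : Fin L → ℝ) (θ : Fin m → ℝ) (lam : Fin n → ℝ)
    (μm : Fin K → Fin L → ℝ)
    (hpiv : ∀ k, 0 < piv k) (hpivs : ∑ k, piv k = 1)
    (hrhov : ∀ l, 0 < rhov l) (hrhovs : ∑ l, rhov l = 1)
    (hθ : ∀ i, 0 < θ i) (hlam : ∀ j, 0 < lam j) (hμm : ∀ k l, 0 < μm k l)
    (Q : Fin m → Fin K → ℝ) (R : Fin n → Fin L → ℝ)
    (hQ : ∀ i k, 0 ≤ Q i k ∧ Q i k ≤ 1) (hQs : ∀ i, ∑ k, Q i k = 1)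
    (hR : ∀ j l, 0 ≤ R j l ∧ R j l ≤ 1) (hRs : ∀ j, ∑ l, R j l = 1)
    (q1 : (Fin m → Fin K) → ℝ) (hq1 : ∀ z, q1 z = ∏ i, Q i (z i))
    (q2 : (Fin n → Fin L) → ℝ) (hq2 : ∀ w, q2 w = ∏ j, R j (w j)) :
    DCLBM.Jobj A q1 q2 piv rhov θ lam μm =
      -(∑ i, ∑ j, θ i * lam j * (∑ k, ∑ l, Q i k * R j l * μm k l))
      + (∑ i, ∑ j, (A i j : ℝ) * (∑ k, ∑ l, Q i k * R j l * Real.log (μm k l)))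
      + (∑ i, ∑ j, (A i j : ℝ) * (Real.log (θ i) + Real.log (lam j)))
      - (∑ i, ∑ j, Real.log (Nat.factorial (A i j) : ℝ))
      + (∑ i, ∑ k, Q i k * Real.log (piv k))
      + (∑ j, ∑ l, R j l * Real.log (rhov l))
      - (∑ i, ∑ k, Q i k * Real.log (Q i k))
      - (∑ j, ∑ l, R j l * Real.log (R j l)) := by
  classical
  set g : Fin m → Fin n → Fin K → Fin L → ℝ := fun i j k l =>
    -(θ i * lam j * μm k l)
      + (A i j : ℝ) * (Real.log (θ i) + Real.log (lam j) + Real.log (μm k l))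
      - Real.log (Nat.factorial (A i j) : ℝ) with hg
  have hq1s : ∑ z : Fin m → Fin K, q1 z = 1 := by
    simp_rw [hq1]; exact dclbm_sum_prod_one Q hQs
  have hq2s : ∑ w : Fin n → Fin L, q2 w = 1 := by
    simp_rw [hq2]; exact dclbm_sum_prod_one R hRs
  have hPpos := dclbm_Ppos A piv rhov θ lam μm hpiv hrhov hθ hlam hμm
  have hsplit : ∀ (z : Fin m → Fin K) (w : Fin n → Fin L),
      q1 z * q2 w * Real.log (DCLBM.Pjoint A piv rhov θ lam μm z w / (q1 z * q2 w))
        = q1 z * q2 w * Real.log (DCLBM.Pjoint A piv rhov θ lam μm z w)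
          - q2 w * (q1 z * Real.log (q1 z)) - q1 z * (q2 w * Real.log (q2 w)) := by
    intro z w
    rcases eq_or_ne (q1 z) 0 with h1 | h1
    · simp [h1]
    rcases eq_or_ne (q2 w) 0 with h2 | h2
    · simp [h2]
    rw [Real.log_div (ne_of_gt (hPpos z w)) (mul_ne_zero h1 h2), Real.log_mul h1 h2]
    ring
  have hH1 : ∑ z : Fin m → Fin K, q1 z * Real.log (q1 z)
      = ∑ i, ∑ k, Q i k * Real.log (Q i k) := by
    simp_rw [hq1]; exact dclbm_entropy Q hQs
  have hH2 : ∑ w : Fin n → Fin L, q2 w * Real.log (q2 w)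
      = ∑ j, ∑ l, R j l * Real.log (R j l) := by
    simp_rw [hq2]; exact dclbm_entropy R hRs
  have hx : ∑ z : Fin m → Fin K, ∑ w : Fin n → Fin L,
      q1 z * q2 w * (∑ i, Real.log (piv (z i)))
        = ∑ i, ∑ k, Q i k * Real.log (piv k) := by
    have h1 : ∀ z : Fin m → Fin K, ∑ w : Fin n → Fin L,
        q1 z * q2 w * (∑ i, Real.log (piv (z i)))
          = q1 z * (∑ i, Real.log (piv (z i))) := by
      intro z
      calc ∑ w : Fin n → Fin L, q1 z * q2 w * (∑ i, Real.log (piv (z i)))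
          = ∑ w : Fin n → Fin L, q2 w * (q1 z * (∑ i, Real.log (piv (z i)))) :=
            Finset.sum_congr rfl fun w _ => by ring
        _ = (∑ w : Fin n → Fin L, q2 w) * (q1 z * (∑ i, Real.log (piv (z i)))) := by
            rw [← Finset.sum_mul]
        _ = q1 z * (∑ i, Real.log (piv (z i))) := by rw [hq2s, one_mul]
    simp_rw [h1, hq1]
    exact dclbm_sum_coord_exp Q hQs (fun i k => Real.log (piv k))
  have hy : ∑ z : Fin m → Fin K, ∑ w : Fin n → Fin L,
      q1 z * q2 w * (∑ j, Real.log (rhov (w j)))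
        = ∑ j, ∑ l, R j l * Real.log (rhov l) := by
    have h1 : ∀ z : Fin m → Fin K, ∑ w : Fin n → Fin L,
        q1 z * q2 w * (∑ j, Real.log (rhov (w j)))
          = q1 z * (∑ w : Fin n → Fin L, q2 w * (∑ j, Real.log (rhov (w j)))) := by
      intro z
      rw [Finset.mul_sum]
      exact Finset.sum_congr rfl fun w _ => by ring
    simp_rw [h1]
    rw [← Finset.sum_mul, hq1s, one_mul]
    simp_rw [hq2]
    exact dclbm_sum_coord_exp R hRs (fun j l => Real.log (rhov l))
  have swap4 : ∀ (t : (Fin m → Fin K) → (Fin n → Fin L) → Fin m → Fin n → ℝ),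
      (∑ z : Fin m → Fin K, ∑ w : Fin n → Fin L, ∑ i : Fin m, ∑ j : Fin n, t z w i j)
        = ∑ i : Fin m, ∑ j : Fin n, ∑ z : Fin m → Fin K, ∑ w : Fin n → Fin L, t z w i j := by
    intro t
    calc (∑ z : Fin m → Fin K, ∑ w : Fin n → Fin L, ∑ i : Fin m, ∑ j : Fin n, t z w i j)
        = ∑ z : Fin m → Fin K, ∑ i : Fin m, ∑ w : Fin n → Fin L, ∑ j : Fin n, t z w i j :=
          Finset.sum_congr rfl fun z _ => Finset.sum_comm
      _ = ∑ z : Fin m → Fin K, ∑ i : Fin m, ∑ j : Fin n, ∑ w : Fin n → Fin L, t z w i j :=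
          Finset.sum_congr rfl fun z _ => Finset.sum_congr rfl fun i _ => Finset.sum_comm
      _ = ∑ i : Fin m, ∑ z : Fin m → Fin K, ∑ j : Fin n, ∑ w : Fin n → Fin L, t z w i j :=
          Finset.sum_comm
      _ = ∑ i : Fin m, ∑ j : Fin n, ∑ z : Fin m → Fin K, ∑ w : Fin n → Fin L, t z w i j :=
          Finset.sum_congr rfl fun i _ => Finset.sum_comm
  have hu : ∑ z : Fin m → Fin K, ∑ w : Fin n → Fin L,
      q1 z * q2 w * (∑ i, ∑ j, g i j (z i) (w j))
        = ∑ i, ∑ j, ∑ k, ∑ l, Q i k * (R j l * g i j k l) := by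
    have h1 : ∀ (z : Fin m → Fin K) (w : Fin n → Fin L),
        q1 z * q2 w * (∑ i, ∑ j, g i j (z i) (w j))
          = ∑ i, ∑ j, q1 z * q2 w * g i j (z i) (w j) := by
      intro z w
      rw [Finset.mul_sum]
      exact Finset.sum_congr rfl fun i _ => Finset.mul_sum _ _ _
    simp_rw [h1]
    rw [swap4]
    refine Finset.sum_congr rfl fun i _ => Finset.sum_congr rfl fun j _ => ?_
    simp_rw [hq1, hq2]
    exact dclbm_double_coord Q R hQs hRs i j (g i j)
  have hkey : ∀ (i : Fin m) (j : Fin n), ∑ k, ∑ l, Q i k * (R j l * g i j k l)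
      = -(θ i * lam j * (∑ k, ∑ l, Q i k * R j l * μm k l))
        + (A i j : ℝ) * (∑ k, ∑ l, Q i k * R j l * Real.log (μm k l))
        + ((A i j : ℝ) * (Real.log (θ i) + Real.log (lam j))
            - Real.log (Nat.factorial (A i j) : ℝ)) := by
    intro i j
    calc ∑ k, ∑ l, Q i k * (R j l * g i j k l)
        = ∑ k, ∑ l, (-((θ i * lam j) * (Q i k * R j l * μm k l))
            + (A i j : ℝ) * (Q i k * R j l * Real.log (μm k l))
            + ((A i j : ℝ) * (Real.log (θ i) + Real.log (lam j))
                - Real.log (Nat.factorial (A i j) : ℝ)) * (Q i k * R j l)) :=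
          Finset.sum_congr rfl fun k _ => Finset.sum_congr rfl fun l _ => by
            simp only [hg]; ring
      _ = -(θ i * lam j * (∑ k, ∑ l, Q i k * R j l * μm k l))
            + (A i j : ℝ) * (∑ k, ∑ l, Q i k * R j l * Real.log (μm k l))
            + ((A i j : ℝ) * (Real.log (θ i) + Real.log (lam j))
                - Real.log (Nat.factorial (A i j) : ℝ)) := by
          simp_rw [Finset.sum_add_distrib, Finset.sum_neg_distrib, ← Finset.mul_sum,
            hRs, mul_one, hQs]
          ring
  have hP1 : ∑ z : Fin m → Fin K, ∑ w : Fin n → Fin L,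
      q1 z * q2 w * Real.log (DCLBM.Pjoint A piv rhov θ lam μm z w)
      = (∑ i, ∑ k, Q i k * Real.log (piv k)) + (∑ j, ∑ l, R j l * Real.log (rhov l))
        + ∑ i, ∑ j, ∑ k, ∑ l, Q i k * (R j l * g i j k l) := by
    have hlog := dclbm_logP A piv rhov θ lam μm hpiv hrhov hθ hlam hμm
    calc ∑ z : Fin m → Fin K, ∑ w : Fin n → Fin L,
        q1 z * q2 w * Real.log (DCLBM.Pjoint A piv rhov θ lam μm z w)
        = ∑ z : Fin m → Fin K, ∑ w : Fin n → Fin L,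
            (q1 z * q2 w * (∑ i, Real.log (piv (z i)))
              + q1 z * q2 w * (∑ j, Real.log (rhov (w j)))
              + q1 z * q2 w * (∑ i, ∑ j, g i j (z i) (w j))) :=
          Finset.sum_congr rfl fun z _ => Finset.sum_congr rfl fun w _ => by
            rw [hlog z w]; simp only [hg]; ring
      _ = _ := by
          simp_rw [Finset.sum_add_distrib]
          rw [hx, hy, hu]
  unfold DCLBM.Jobj
  simp_rw [hsplit, Finset.sum_sub_distrib]
  rw [hP1]
  have hT2 : ∑ z : Fin m → Fin K, ∑ w : Fin n → Fin L, q2 w * (q1 z * Real.log (q1 z))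
      = ∑ i, ∑ k, Q i k * Real.log (Q i k) := by
    simp_rw [← Finset.sum_mul, hq2s, one_mul]
    exact hH1
  have hT3 : ∑ z : Fin m → Fin K, ∑ w : Fin n → Fin L, q1 z * (q2 w * Real.log (q2 w))
      = ∑ j, ∑ l, R j l * Real.log (R j l) := by
    simp_rw [← Finset.mul_sum]
    rw [← Finset.sum_mul, hq1s, one_mul]
    exact hH2
  rw [hT2, hT3]
  simp_rw [hkey, Finset.sum_add_distrib, Finset.sum_sub_distrib, Finset.sum_neg_distrib]
  ring
end
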